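/- Let S be a regular local noetherian ring of Krull dimension g+2 which is a flat local O-algebra, let J ⊆ S be an ideal such that S/J is O-flat and the structure map O → S/J is an isomorphism, and let M be a finitely generated S-module with J-depth equal to g and projective dimension pd_S(M) = 1. Then there exists an M-regular sequence (y'_1, …, y'_g) of elements of J whose images in J/(ϖ·J + J²) are linearly independent over the residue field O/(ϖ) (this quotient being a (g+1)-dimensional O/(ϖ)-vector space). -/

import Mathlib

open nonZeroDivisors

noncomputable section

/-- `M` has a length-one finite free resolution over `S`, i.e. there is an exact sequence
`0 → S^n → S^m → M → 0`. -/
def HasLengthOneFreeResolution (S M : Type) [CommRing S] [AddCommGroup M] [Module S M] : Prop :=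
  ∃ (n m : ℕ) (a : (Fin n → S) →ₗ[S] (Fin m → S)) (b : (Fin m → S) →ₗ[S] M),
    Function.Injective a ∧ Function.Surjective b ∧ LinearMap.range a = LinearMap.ker b

/-- The projective dimension of `M` over `S` is `1`: the minimal length of a finite free
resolution of `M` over `S` is `1`. -/
def ProjDimOne (S M : Type) [CommRing S] [AddCommGroup M] [Module S M] : Prop :=
  HasLengthOneFreeResolution S M ∧ ¬ ∃ n : ℕ, Nonempty (M ≃ₗ[S] (Fin n → S))

/-- `depth_J(M) = g`: the maximal length of an `M`-regular sequence of elements of `J` is `g`. -/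
def DepthEq (S M : Type) [CommRing S] [AddCommGroup M] [Module S M] (J : Ideal S) (g : ℕ) :
    Prop :=
  (∃ y : Fin g → S, (∀ i, y i ∈ J) ∧ RingTheory.Sequence.IsRegular M (List.ofFn y)) ∧
    ¬ ∃ y : Fin (g + 1) → S, (∀ i, y i ∈ J) ∧ RingTheory.Sequence.IsRegular M (List.ofFn y)

open Pointwise Submodule RingTheory.Sequence IsLocalRing

section Helpers

variable {R M : Type*} [CommRing R] [AddCommGroup M] [Module R M]

theorem my_mem_smul_top_iff (r : R) (x : M) :
    x ∈ r • (⊤ : Submodule R M) ↔ ∃ y : M, r • y = x := by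
  rw [← SetLike.mem_coe, Submodule.coe_pointwise_smul, Set.mem_smul_set]
  simp

theorem my_ass_iff [IsNoetherianRing R] {p : Ideal R} :
    IsAssociatedPrime p M ↔ p.IsPrime ∧ ∃ x : M, p = (R ∙ x).annihilator := by
  rw [isAssociatedPrime_iff]
  have h : ∀ x : M, (⊥ : Submodule R M).colon {x} = (R ∙ x).annihilator := fun x => by
    ext r
    rw [Submodule.mem_annihilator_span_singleton, Submodule.mem_colon_singleton,
      Submodule.mem_bot]
  simp only [h]

theorem my_isAssociatedPrime_subset [IsNoetherianRing R] (N : Submodule R M) {p : Ideal R}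
    (hp : IsAssociatedPrime p M) :
    IsAssociatedPrime p N ∨ IsAssociatedPrime p (M ⧸ N) := by
  obtain ⟨hprime, x, hx⟩ := my_ass_iff.mp hp
  by_cases hcase : ∃ a : R, a • x ∈ N ∧ a • x ≠ 0
  · obtain ⟨a, haN, ha0⟩ := hcase
    left
    refine my_ass_iff.mpr ⟨hprime, ⟨a • x, haN⟩, ?_⟩
    ext b
    rw [Submodule.mem_annihilator_span_singleton]
    constructor
    · intro hb
      have hbx : b • x = 0 := (Submodule.mem_annihilator_span_singleton _ _).mp (hx ▸ hb)
      ext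
      simp [smul_comm b a x, hbx]
    · intro hb
      have : b • (a • x) = 0 := by
        have := congrArg (Subtype.val) hb
        simpa using this
      rw [smul_smul] at this
      have hba : b * a ∈ p := hx ▸ (Submodule.mem_annihilator_span_singleton _ _).mpr this
      rcases hprime.mem_or_mem hba with h | h
      · exact h
      · exact absurd ((Submodule.mem_annihilator_span_singleton _ _).mp (hx ▸ h)) ha0
  · push_neg at hcase
    right
    refine my_ass_iff.mpr ⟨hprime, N.mkQ x, ?_⟩
    ext b
    rw [Submodule.mem_annihilator_span_singleton]
    constructor
    · intro hb
      have hbx : b • x = 0 := (Submodule.mem_annihilator_span_singleton _ _).mp (hx ▸ hb)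
      rw [← map_smul, hbx, map_zero]
    · intro hb
      rw [← map_smul, Submodule.mkQ_apply, Submodule.Quotient.mk_eq_zero] at hb
      have : b • x = 0 := hcase b hb
      exact hx ▸ (Submodule.mem_annihilator_span_singleton _ _).mpr this

theorem my_associatedPrimes_finite (R M : Type*) [CommRing R] [IsNoetherianRing R]
    [AddCommGroup M] [Module R M] [IsNoetherian R M] :
    (associatedPrimes R M).Finite := by
  suffices h : ∀ N : Submodule R M, (associatedPrimes R (M ⧸ N)).Finite by
    have := h ⊥
    rwa [LinearEquiv.AssociatedPrimes.eq ((⊥ : Submodule R M).quotEquivOfEqBot rfl)] at this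
  intro N
  refine IsNoetherian.induction (P := fun N => (associatedPrimes R (M ⧸ N)).Finite)
    (fun N ih => ?_) N
  by_cases htop : N = ⊤
  · subst htop
    haveI : Subsingleton (M ⧸ (⊤ : Submodule R M)) :=
      Submodule.Quotient.subsingleton_iff.mpr rfl
    rw [associatedPrimes.eq_empty_of_subsingleton]
    exact Set.finite_empty
  · -- N ≠ ⊤ : quotient nontrivial
    have hnt : Nontrivial (M ⧸ N) := by
      rcases not_subsingleton_iff_nontrivial.mp
        (fun hs => htop (Submodule.Quotient.subsingleton_iff.mp hs)) with h
      exact h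
    obtain ⟨xb, hxb⟩ := exists_ne (0 : M ⧸ N)
    obtain ⟨p, hp, -⟩ := exists_le_isAssociatedPrime_of_isNoetherianRing R xb hxb
    obtain ⟨hprime, yb, hyb⟩ := my_ass_iff.mp hp
    have hyb0 : yb ≠ 0 := by
      rintro rfl
      rw [Submodule.span_zero_singleton, Submodule.annihilator_bot] at hyb
      exact hprime.ne_top hyb
    obtain ⟨y, hy⟩ := Submodule.Quotient.mk_surjective N yb
    have hyN : y ∉ N := fun h => hyb0 (hy ▸ (Submodule.Quotient.mk_eq_zero N).mpr h)
    set N' : Submodule R M := N ⊔ R ∙ y with hN'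
    have hNle : N ≤ N' := le_sup_left
    have hNlt : N < N' := lt_of_le_of_ne hNle (fun h => hyN (h ▸ (le_sup_right :
      (R ∙ y) ≤ N') (Submodule.mem_span_singleton_self y)))
    have hKmap : N'.map N.mkQ = (R ∙ yb) := by
      rw [hN', Submodule.map_sup, Submodule.mkQ_map_self, bot_sup_eq, Submodule.map_span,
        Set.image_singleton, Submodule.mkQ_apply, hy]
    -- associatedPrimes of span yb  =  {p}
    have hassK : associatedPrimes R (R ∙ yb : Submodule R (M ⧸ N)) = {p} := by
      have hker : LinearMap.ker (LinearMap.toSpanSingleton R (M ⧸ N) yb) = p := by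
        ext a
        rw [LinearMap.mem_ker, hyb, Submodule.mem_annihilator_span_singleton]
        rfl
      have e : (R ⧸ p) ≃ₗ[R] (R ∙ yb : Submodule R (M ⧸ N)) :=
        (Submodule.quotEquivOfEq _ _ hker.symm) ≪≫ₗ
          (LinearMap.toSpanSingleton R (M ⧸ N) yb).quotKerEquivRange ≪≫ₗ
            LinearEquiv.ofEq _ _ (LinearMap.span_singleton_eq_range R (M ⧸ N) yb).symm
      rw [← LinearEquiv.AssociatedPrimes.eq e,
        associatedPrimes.eq_singleton_of_isPrimary hprime.isPrimary, hprime.radical]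
    -- inclusion
    have hsub : associatedPrimes R (M ⧸ N) ⊆ {p} ∪ associatedPrimes R (M ⧸ N') := by
      intro q hq
      rcases my_isAssociatedPrime_subset (R ∙ yb) hq with h | h
      · exact Or.inl (by rw [← hassK]; exact h)
      · exact Or.inr ((LinearEquiv.AssociatedPrimes.eq
          ((Submodule.quotEquivOfEq _ _ hKmap.symm) ≪≫ₗ
            Submodule.quotientQuotientEquivQuotient N N' hNle)) ▸ h)
    exact ((Set.finite_singleton p).union (ih N' hNlt)).subset hsub



theorem my_notMem_ass_of_regular [IsNoetherianRing R] {z : R} (hz : IsSMulRegular M z)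
    {p : Ideal R}
    (hp : IsAssociatedPrime p M) : z ∉ p := by
  obtain ⟨hprime, x, hx⟩ := my_ass_iff.mp hp
  have hx0 : x ≠ 0 := by
    rintro rfl
    rw [Submodule.span_zero_singleton, Submodule.annihilator_bot] at hx
    exact hprime.ne_top hx
  intro hzp
  have : z • x = 0 := (Submodule.mem_annihilator_span_singleton _ _).mp (hx ▸ hzp)
  exact hx0 (hz (this.trans (smul_zero z).symm))

theorem my_isSMulRegular_of_notMem_ass [IsNoetherianRing R] {c : R}
    (h : ∀ p ∈ associatedPrimes R M, c ∉ p) : IsSMulRegular M c := by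
  by_contra hc
  obtain ⟨a, b, hab, hne⟩ := Function.not_injective_iff.mp hc
  have hzd : c ∈ { r : R | ∃ x : M, x ≠ 0 ∧ r • x = 0 } :=
    ⟨a - b, sub_ne_zero.mpr hne, by rw [smul_sub, hab, sub_self]⟩
  rw [← biUnion_associatedPrimes_eq_zero_divisors] at hzd
  obtain ⟨p, hp, hcp⟩ := Set.mem_iUnion₂.mp hzd
  exact h p hp hcp

theorem my_exists_killed [IsNoetherianRing R] [IsNoetherian R M] (J : Ideal R)
    (h : ∀ z ∈ J, ¬ IsSMulRegular M z) :
    ∃ x : M, x ≠ 0 ∧ ∀ j ∈ J, j • x = 0 := by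
  classical
  have hfin := my_associatedPrimes_finite R M
  have hsub : (J : Set R) ⊆ ⋃ p ∈ (hfin.toFinset : Set (Ideal R)), (p : Set R) := by
    intro z hzJ
    have hz := h z hzJ
    by_contra hz'
    refine hz (my_isSMulRegular_of_notMem_ass (fun p hp hcp => hz' ?_))
    exact Set.mem_biUnion (hfin.mem_toFinset.mpr hp) hcp
  have := (Ideal.subset_union_prime (s := hfin.toFinset) (f := id) ⊤ ⊤
    (fun p hp _ _ => (hfin.mem_toFinset.mp hp).isPrime)).mp hsub
  obtain ⟨p, hpmem, hJp⟩ := this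
  obtain ⟨hprime, x, hx⟩ := my_ass_iff.mp (hfin.mem_toFinset.mp hpmem)
  refine ⟨x, ?_, fun j hj => ?_⟩
  · rintro rfl
    rw [Submodule.span_zero_singleton, Submodule.annihilator_bot] at hx
    exact hprime.ne_top hx
  · exact (Submodule.mem_annihilator_span_singleton _ _).mp (hx ▸ hJp hj)

theorem my_avoid (J : Ideal R) (P : Finset (Ideal R)) (hP : ∀ p ∈ P, p.IsPrime)
    (hJP : ∀ p ∈ P, ¬ J ≤ p) (W : Ideal R) (hW : ¬ J ≤ W) :
    ∃ c ∈ J, c ∉ W ∧ ∀ p ∈ P, c ∉ p := by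
  classical
  set s : Finset (Bool × Ideal R) := insert (false, W) (P.image (fun p => (true, p))) with hs
  have hp : ∀ i ∈ s, i ≠ (false, W) → i ≠ (false, W) → (i.2).IsPrime := by
    intro i hi hne _
    rcases Finset.mem_insert.mp hi with h | h
    · exact absurd h hne
    · obtain ⟨p, hpP, rfl⟩ := Finset.mem_image.mp h
      exact hP p hpP
  by_contra hcon
  push_neg at hcon
  have hsub : (J : Set R) ⊆ ⋃ i ∈ (s : Set (Bool × Ideal R)), ((i.2 : Ideal R) : Set R) := by
    intro z hzJ
    rcases Classical.em (z ∈ W) with hzW | hzW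
    · exact Set.mem_biUnion (show ((false, W) : Bool × Ideal R) ∈ (s : Set (Bool × Ideal R))
        by simp [hs]) hzW
    · obtain ⟨p, hpP, hzp⟩ := hcon z hzJ hzW
      exact Set.mem_biUnion (show ((true, p) : Bool × Ideal R) ∈ (s : Set (Bool × Ideal R))
        by simp [hs, hpP]) hzp
  obtain ⟨i, his, hle⟩ :=
    (Ideal.subset_union_prime (s := s) (f := fun i => i.2) (false, W) (false, W) hp).mp hsub
  rcases Finset.mem_insert.mp his with rfl | h
  · exact hW hle
  · obtain ⟨p, hpP, rfl⟩ := Finset.mem_image.mp h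
    exact hJP p hpP hle


theorem my_avoid' (J : Ideal R) (P : Finset (Ideal R)) (hP : ∀ p ∈ P, p.IsPrime)
    (hJP : ∀ p ∈ P, ¬ J ≤ p) : ∃ c ∈ J, ∀ p ∈ P, c ∉ p := by
  classical
  by_contra hcon
  push_neg at hcon
  have hsub : (J : Set R) ⊆ ⋃ p ∈ (P : Set (Ideal R)), ((p : Ideal R) : Set R) := by
    intro z hzJ
    obtain ⟨p, hpP, hzp⟩ := hcon z hzJ
    exact Set.mem_biUnion hpP hzp
  obtain ⟨p, hpP, hle⟩ :=
    (Ideal.subset_union_prime (s := P) (f := id) ⊤ ⊤ (fun p hp _ _ => hP p hp)).mp hsub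
  exact hJP p hpP hle

theorem my_cons_regular [IsLocalRing R] [IsNoetherian R M] {rs : List R} {c : R}
    (hrs : ∀ r ∈ rs, r ∈ maximalIdeal R) (hc : c ∈ maximalIdeal R)
    (h1 : IsWeaklyRegular M rs)
    (h2 : IsSMulRegular (M ⧸ (Ideal.ofList rs • ⊤ : Submodule R M)) c) :
    IsWeaklyRegular M (c :: rs) := by
  have happ : IsWeaklyRegular M (rs ++ [c]) :=
    (isWeaklyRegular_append_iff M rs [c]).mpr
      ⟨h1, (isWeaklyRegular_singleton_iff _ c).mpr h2⟩
  refine IsLocalRing.isWeaklyRegular_of_perm_of_subset_maximalIdeal happ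
    (List.perm_append_singleton c rs) (fun r hr => ?_)
  rcases List.mem_append.mp hr with h | h
  · exact hrs r h
  · rw [List.mem_singleton.mp h]; exact hc

theorem my_rees {R : Type*} [CommRing R] [IsLocalRing R] [IsNoetherianRing R] (J : Ideal R)
    (hJm : J ≤ maximalIdeal R) :
    ∀ (k : ℕ) (M : Type*) [AddCommGroup M] [Module R M] [Module.Finite R M],
      ∀ (a b : List R), a.length = k + 1 → b.length = k →
      (∀ r ∈ a, r ∈ J) → (∀ r ∈ b, r ∈ J) →
      IsWeaklyRegular M a → IsWeaklyRegular M b →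
      ∃ z ∈ J, IsSMulRegular (M ⧸ (Ideal.ofList b • ⊤ : Submodule R M)) z := by
  intro k
  induction k with
  | zero =>
    intro M _ _ _ a b ha hb haJ hbJ hareg hbreg
    rw [List.length_eq_zero_iff] at hb; subst hb
    obtain ⟨z, rfl⟩ := List.length_eq_one_iff.mp ha
    refine ⟨z, haJ z (List.mem_singleton_self z), ?_⟩
    have hz := (isWeaklyRegular_singleton_iff M z).mp hareg
    have hbot : (Ideal.ofList ([] : List R) • ⊤ : Submodule R M) = ⊥ := by simp
    exact ((Submodule.quotEquivOfEqBot _ hbot).symm.isSMulRegular_congr z).mp hz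
  | succ k ih =>
    intro M _ _ _ a b ha hb haJ hbJ hareg hbreg
    classical
    have hbk : k < b.length := by omega
    have hak : k + 1 < a.length := by omega
    -- the element u : last element of b, and the truncations
    have hureg : IsSMulRegular (M ⧸ (Ideal.ofList (b.take k) • ⊤ : Submodule R M)) (b[k]'hbk) :=
      hbreg.regular_mod_prev k hbk
    have havreg : IsSMulRegular
        (M ⧸ (Ideal.ofList (a.take (k + 1)) • ⊤ : Submodule R M)) (a[k+1]'hak) :=
      hareg.regular_mod_prev (k + 1) hak
    -- choose c regular on both quotients
    set Qb := M ⧸ (Ideal.ofList (b.take k) • ⊤ : Submodule R M) with hQb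
    set Qa := M ⧸ (Ideal.ofList (a.take (k + 1)) • ⊤ : Submodule R M) with hQa
    have hfinb := my_associatedPrimes_finite R Qb
    have hfina := my_associatedPrimes_finite R Qa
    set P : Finset (Ideal R) := hfinb.toFinset ∪ hfina.toFinset with hP
    have hPprime : ∀ p ∈ P, p.IsPrime := by
      intro p hp
      rcases Finset.mem_union.mp hp with h | h
      · exact (hfinb.mem_toFinset.mp h).isPrime
      · exact (hfina.mem_toFinset.mp h).isPrime
    have hJP : ∀ p ∈ P, ¬ J ≤ p := by
      intro p hp hJle
      rcases Finset.mem_union.mp hp with h | h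
      · exact my_notMem_ass_of_regular hureg (hfinb.mem_toFinset.mp h)
          (hJle (hbJ _ (List.getElem_mem hbk)))
      · exact my_notMem_ass_of_regular havreg (hfina.mem_toFinset.mp h)
          (hJle (haJ _ (List.getElem_mem hak)))
    obtain ⟨c, hcJ, hcP⟩ := my_avoid' J P hPprime hJP
    have hcQb : IsSMulRegular Qb c := my_isSMulRegular_of_notMem_ass
      (fun p hp => hcP p (Finset.mem_union_left _ (hfinb.mem_toFinset.mpr hp)))
    have hcQa : IsSMulRegular Qa c := my_isSMulRegular_of_notMem_ass
      (fun p hp => hcP p (Finset.mem_union_right _ (hfina.mem_toFinset.mpr hp)))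
    have htakeb : IsWeaklyRegular M (b.take k) := by
      have h := hbreg
      rw [← List.take_append_drop k b] at h
      exact ((isWeaklyRegular_append_iff M _ _).mp h).1
    have htakea : IsWeaklyRegular M (a.take (k + 1)) := by
      have h := hareg
      rw [← List.take_append_drop (k + 1) a] at h
      exact ((isWeaklyRegular_append_iff M _ _).mp h).1
    have hmemb : ∀ r ∈ b.take k, r ∈ maximalIdeal R :=
      fun r hr => hJm (hbJ r (List.take_subset k b hr))
    have hmema : ∀ r ∈ a.take (k + 1), r ∈ maximalIdeal R :=
      fun r hr => hJm (haJ r (List.take_subset _ a hr))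
    have h1 : IsWeaklyRegular M (c :: b.take k) :=
      my_cons_regular hmemb (hJm hcJ) htakeb hcQb
    have h2 : IsWeaklyRegular M (c :: a.take (k + 1)) :=
      my_cons_regular hmema (hJm hcJ) htakea hcQa
    rw [isWeaklyRegular_cons_iff] at h1 h2
    obtain ⟨z, hzJ, hz⟩ := ih (QuotSMulTop c M) (a.take (k + 1)) (b.take k)
      (by rw [List.length_take]; omega) (by rw [List.length_take]; omega)
      (fun r hr => haJ r (List.take_subset _ a hr))
      (fun r hr => hbJ r (List.take_subset _ b hr)) h2.2 h1.2
    have e : ((QuotSMulTop c M) ⧸ (Ideal.ofList (b.take k) • ⊤ :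
        Submodule R (QuotSMulTop c M))) ≃ₗ[R] QuotSMulTop c Qb :=
      (Submodule.quotOfListConsSMulTopEquivQuotSMulTopInner M c (b.take k)).symm ≪≫ₗ
        Submodule.quotOfListConsSMulTopEquivQuotSMulTopOuter M c (b.take k)
    have hzc : IsSMulRegular (QuotSMulTop c Qb) z := (e.isSMulRegular_congr z).mp hz
    have hbeq : b.take k ++ [b[k]'hbk] = b := by
      rw [List.take_concat_get', ← hb, List.take_length]
    have hideq : Ideal.ofList b = Ideal.ofList ((b[k]'hbk) :: b.take k) := by
      apply congrArg Ideal.span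
      ext r
      simp only [Set.mem_setOf_eq]
      constructor
      · intro hr
        rw [← hbeq] at hr
        rcases List.mem_append.mp hr with h | h
        · exact List.mem_cons_of_mem _ h
        · rw [List.mem_singleton.mp h]; exact List.mem_cons_self
      · intro hr
        rw [← hbeq]
        rcases List.mem_cons.mp hr with h | h
        · exact List.mem_append.mpr (Or.inr (h ▸ List.mem_singleton_self _))
        · exact List.mem_append.mpr (Or.inl h)
    have egoal : (M ⧸ (Ideal.ofList b • ⊤ : Submodule R M)) ≃ₗ[R]
        QuotSMulTop (b[k]'hbk) Qb :=
      Submodule.quotEquivOfEq _ _ (by rw [hideq]) ≪≫ₗ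
        Submodule.quotOfListConsSMulTopEquivQuotSMulTopOuter M (b[k]'hbk) (b.take k)
    by_contra hcon
    push_neg at hcon
    have hnone : ∀ z' ∈ J, ¬ IsSMulRegular (QuotSMulTop (b[k]'hbk) Qb) z' := by
      intro z' hz' hreg
      exact hcon z' hz' ((egoal.isSMulRegular_congr z').mpr hreg)
    obtain ⟨x', hx'0, hx'kill⟩ := my_exists_killed J hnone
    obtain ⟨x, hx⟩ := Submodule.Quotient.mk_surjective _ x'
    obtain ⟨y, hy⟩ : ∃ y : Qb, (b[k]'hbk) • y = c • x := by
      have h0 : c • x' = 0 := hx'kill c hcJ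
      rw [← hx, ← Submodule.Quotient.mk_smul, Submodule.Quotient.mk_eq_zero] at h0
      exact (my_mem_smul_top_iff _ _).mp h0
    have hy0 : (Submodule.Quotient.mk y : QuotSMulTop c Qb) ≠ 0 := by
      intro h0
      rw [Submodule.Quotient.mk_eq_zero] at h0
      obtain ⟨w, hw⟩ := (my_mem_smul_top_iff _ _).mp h0
      apply hx'0
      have hcc : c • x = c • ((b[k]'hbk) • w) := by
        rw [smul_comm, hw]
        exact hy.symm
      rw [← hx, hcQb hcc, Submodule.Quotient.mk_eq_zero]
      exact Submodule.smul_mem_pointwise_smul w _ ⊤ trivial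
    have hkill : ∀ j ∈ J, j • (Submodule.Quotient.mk y : QuotSMulTop c Qb) = 0 := by
      intro j hj
      have h0 : j • x' = 0 := hx'kill j hj
      rw [← hx, ← Submodule.Quotient.mk_smul, Submodule.Quotient.mk_eq_zero] at h0
      obtain ⟨t, ht⟩ := (my_mem_smul_top_iff _ _).mp h0
      have key : (b[k]'hbk) • (c • t) = (b[k]'hbk) • (j • y) := by
        rw [smul_comm _ c, ht, smul_comm _ j, ← hy, smul_comm j]
      rw [← Submodule.Quotient.mk_smul, Submodule.Quotient.mk_eq_zero]
      exact (my_mem_smul_top_iff _ _).mpr ⟨t, hureg key⟩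
    exact hy0 (hzc ((hkill z hzJ).trans (smul_zero z).symm))

end Helpers


theorem statement14
    (O : Type) [CommRing O] [IsDomain O] [IsDiscreteValuationRing O] [CharZero O]
    (ϖ : O) (hϖ : Irreducible ϖ)
    (g : ℕ)
    -- `S` is a regular local noetherian ring of Krull dimension `g+2`,
    -- flat local `O`-algebra
    (S : Type) [CommRing S] [IsLocalRing S] [IsNoetherianRing S]
    [Algebra O S] [Module.Flat O S] (hloc : IsLocalHom (algebraMap O S))
    (hdim : ringKrullDim S = g + 2)
    (hreg : ∃ v : Fin (g + 2) → S, Ideal.span (Set.range v) = IsLocalRing.maximalIdeal S)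
    -- `J ⊆ S` with `S/J` `O`-flat and `O → S/J` an isomorphism
    (J : Ideal S) [Module.Flat O (S ⧸ J)]
    (hJiso : Function.Bijective (algebraMap O (S ⧸ J)))
    -- `M` finitely generated with `depth_J(M) = g` and `pd_S(M) = 1`
    (M : Type) [AddCommGroup M] [Module S M] [Module.Finite S M]
    (hdepth : DepthEq S M J g) (hpd : ProjDimOne S M) :
    ∃ y : Fin g → S, (∀ i, y i ∈ J) ∧ RingTheory.Sequence.IsRegular M (List.ofFn y) ∧
      -- the images of the `y i` in `J/(ϖ·J + J²)` are linearly independent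
      -- over the residue field `O/(ϖ)`
      ∀ c : Fin g → O,
        (∑ i, c i • y i) ∈ (Ideal.span {algebraMap O S ϖ} * J + J * J : Ideal S) →
          ∀ i, ϖ ∣ c i := by
  classical
  obtain ⟨⟨x, hxJ, hxreg⟩, -⟩ := hdepth
  obtain ⟨-, hnotfree⟩ := hpd
  have hMnt : Nontrivial M := by
    by_contra hM
    rw [not_nontrivial_iff_subsingleton] at hM
    haveI : Subsingleton (Fin 0 → S) := ⟨fun f g => funext fun i => i.elim0⟩
    have e : M ≃ₗ[S] (Fin 0 → S) :=
      { toFun := fun _ => 0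
        map_add' := fun _ _ => (by simp)
        map_smul' := fun _ _ => (by simp)
        invFun := fun _ => 0
        left_inv := fun a => Subsingleton.elim _ _
        right_inv := fun a => Subsingleton.elim _ _ }
    exact hnotfree ⟨0, ⟨e⟩⟩
  have h01 : (0 : S ⧸ J) ≠ 1 := by
    intro h
    refine zero_ne_one (hJiso.injective ?_)
    rw [map_zero, map_one]
    exact h
  have hJtop : J ≠ ⊤ := by
    intro h
    haveI : Subsingleton (S ⧸ J) :=
      Submodule.Quotient.subsingleton_iff.mpr h
    exact h01 (Subsingleton.elim _ _)
  have hJm : J ≤ IsLocalRing.maximalIdeal S := IsLocalRing.le_maximalIdeal hJtop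
  have hpiS : algebraMap O S ϖ ∈ IsLocalRing.maximalIdeal S := by
    rw [IsLocalRing.mem_maximalIdeal, mem_nonunits_iff]
    exact fun hu => hϖ.not_isUnit (hloc.map_nonunit ϖ hu)
  set I : Ideal S := Ideal.span {algebraMap O S ϖ} * J + J * J with hIdef
  have hIle : I ≤ (IsLocalRing.maximalIdeal S) • J := by
    rw [hIdef, Submodule.add_eq_sup, smul_eq_mul]
    apply sup_le
    · exact Ideal.mul_mono_left (Ideal.span_le.mpr (Set.singleton_subset_iff.mpr hpiS))
    · exact Ideal.mul_mono_left hJm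
  have hxw : IsWeaklyRegular M (List.ofFn x) := hxreg.toIsWeaklyRegular
  have key : ∀ n, n ≤ g → ∃ y : Fin n → S, (∀ i, y i ∈ J) ∧
      IsWeaklyRegular M (List.ofFn y) ∧
      ∀ c : Fin n → O, (∑ i, c i • y i) ∈ I → ∀ i, ϖ ∣ c i := by
    intro n
    induction n with
    | zero =>
      intro _
      refine ⟨fun i => i.elim0, fun i => i.elim0, ?_, fun c hc i => i.elim0⟩
      rw [List.ofFn_zero]
      exact IsWeaklyRegular.nil S M
    | succ n ihn =>
      intro hng
      obtain ⟨y, hyJ, hyreg, hyind⟩ := ihn (Nat.le_of_succ_le hng)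
      have htake : IsWeaklyRegular M ((List.ofFn x).take (n + 1)) := by
        have h := hxw
        rw [← List.take_append_drop (n + 1) (List.ofFn x)] at h
        exact ((isWeaklyRegular_append_iff M _ _).mp h).1
      obtain ⟨z₀, hz₀J, hz₀⟩ := my_rees J hJm n M ((List.ofFn x).take (n + 1)) (List.ofFn y)
        (by rw [List.length_take, List.length_ofFn]; omega) (by rw [List.length_ofFn])
        (fun r hr => by
          obtain ⟨i, rfl⟩ := (List.mem_ofFn' _ _).mp (List.take_subset _ _ hr); exact hxJ i)
        (fun r hr => by obtain ⟨i, rfl⟩ := (List.mem_ofFn' _ _).mp hr; exact hyJ i)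
        htake hyreg
      have hofLe : Ideal.ofList (List.ofFn y) ≤ J := Ideal.span_le.mpr (fun r hr => by
        obtain ⟨i, rfl⟩ := (List.mem_ofFn' _ _).mp hr; exact hyJ i)
      have hQnt : (⊤ : Submodule S M) ≠ Ideal.ofList (List.ofFn y) • ⊤ :=
        Submodule.top_ne_ideal_smul_of_le_jacobson_annihilator
          ((hofLe.trans hJm).trans (IsLocalRing.maximalIdeal_le_jacobson _))
      set W : Ideal S := Ideal.span (Set.range y) ⊔ I with hWdef
      have hJW : ¬ J ≤ W := by
        intro hle
        have hsp : Ideal.span (Set.range y) = Ideal.ofList (List.ofFn y) := by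
          apply congrArg Ideal.span
          ext r
          exact (List.mem_ofFn' y r).symm
        have hNak : J ≤ Ideal.span (Set.range y) :=
          Submodule.le_of_le_smul_of_le_jacobson_bot (IsNoetherian.noetherian J)
            (IsLocalRing.maximalIdeal_le_jacobson ⊥)
            (hle.trans (sup_le_sup_left hIle _))
        haveI hQnontriv : Nontrivial
            (M ⧸ (Ideal.ofList (List.ofFn y) • ⊤ : Submodule S M)) := by
          rw [← not_subsingleton_iff_nontrivial, Submodule.Quotient.subsingleton_iff]
          exact fun h => hQnt h.symm
        obtain ⟨q, hq0⟩ :=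
          exists_ne (0 : M ⧸ (Ideal.ofList (List.ofFn y) • ⊤ : Submodule S M))
        obtain ⟨m0, rfl⟩ := Submodule.Quotient.mk_surjective _ q
        have hzero : z₀ • (Submodule.Quotient.mk m0 :
            M ⧸ (Ideal.ofList (List.ofFn y) • ⊤ : Submodule S M)) = 0 := by
          rw [← Submodule.Quotient.mk_smul, Submodule.Quotient.mk_eq_zero]
          exact Submodule.smul_mem_smul (hsp ▸ hNak hz₀J) trivial
        exact hq0 (hz₀ (hzero.trans (smul_zero z₀).symm))
      have hfin := my_associatedPrimes_finite S
        (M ⧸ (Ideal.ofList (List.ofFn y) • ⊤ : Submodule S M))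
      have hPprime : ∀ p ∈ hfin.toFinset, p.IsPrime :=
        fun p hp => (hfin.mem_toFinset.mp hp).isPrime
      have hJP : ∀ p ∈ hfin.toFinset, ¬ J ≤ p := fun p hp hle =>
        my_notMem_ass_of_regular hz₀ (hfin.mem_toFinset.mp hp) (hle hz₀J)
      obtain ⟨z, hzJ, hzW, hzP⟩ := my_avoid J hfin.toFinset hPprime hJP W hJW
      have hzreg : IsSMulRegular (M ⧸ (Ideal.ofList (List.ofFn y) • ⊤ : Submodule S M)) z :=
        my_isSMulRegular_of_notMem_ass (fun p hp => hzP p (hfin.mem_toFinset.mpr hp))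
      have hofn : List.ofFn (Fin.snoc y z : Fin (n + 1) → S) = List.ofFn y ++ [z] := by
        rw [List.ofFn_succ', List.concat_eq_append]
        congr 1
        · exact congrArg List.ofFn (funext fun i => by rw [Fin.snoc_castSucc])
        · rw [Fin.snoc_last]
      refine ⟨Fin.snoc y z, ?_, ?_, ?_⟩
      · intro i
        refine Fin.lastCases ?_ ?_ i
        · rw [Fin.snoc_last]; exact hzJ
        · intro j; rw [Fin.snoc_castSucc]; exact hyJ j
      · rw [hofn, isWeaklyRegular_append_iff]
        exact ⟨hyreg, (isWeaklyRegular_singleton_iff _ z).mpr hzreg⟩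
      · intro c hc
        have hsum : ∑ i : Fin (n + 1), c i • (Fin.snoc y z : Fin (n + 1) → S) i =
            (∑ i : Fin n, c i.castSucc • y i) + c (Fin.last n) • z := by
          rw [Fin.sum_univ_castSucc]
          simp [Fin.snoc_castSucc, Fin.snoc_last]
        have hlast : ϖ ∣ c (Fin.last n) := by
          by_contra hndvd
          have hcunit : IsUnit (c (Fin.last n)) := by
            by_contra hcu
            refine hndvd (Ideal.mem_span_singleton.mp ?_)
            rw [← (IsDiscreteValuationRing.irreducible_iff_uniformizer ϖ).mp hϖ]
            exact IsLocalRing.mem_maximalIdeal _ |>.mpr (mem_nonunits_iff.mpr hcu)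
          have h1 : (∑ i : Fin n, c i.castSucc • y i) ∈ W :=
            Submodule.sum_mem _ (fun i _ => by
              rw [Algebra.smul_def]
              exact Submodule.mem_sup_left
                (Ideal.mul_mem_left _ _ (Ideal.subset_span ⟨i, rfl⟩)))
          have h2 : c (Fin.last n) • z ∈ W := by
            have hcW : (∑ i, c i • (Fin.snoc y z : Fin (n + 1) → S) i) ∈ W :=
              Submodule.mem_sup_right hc
            rw [hsum] at hcW
            exact (Submodule.add_mem_iff_right _ h1).mp hcW
          rw [Algebra.smul_def] at h2
          exact hzW ((Ideal.unit_mul_mem_iff_mem W (hcunit.map (algebraMap O S))).mp h2)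
        have hdvd := hlast
        obtain ⟨d, hd⟩ := hdvd
        have hlastI : c (Fin.last n) • z ∈ I := by
          rw [hd, Algebra.smul_def, map_mul, mul_assoc, hIdef, Submodule.add_eq_sup]
          refine Submodule.mem_sup_left (Ideal.mul_mem_mul (Ideal.subset_span rfl) ?_)
          exact Ideal.mul_mem_left J _ hzJ
        have hrest : (∑ i : Fin n, c i.castSucc • y i) ∈ I := by
          have hc' := hc
          rw [hsum] at hc'
          exact (Submodule.add_mem_iff_left _ hlastI).mp hc'
        have hprev := hyind (fun i => c i.castSucc) hrest
        intro i
        refine Fin.lastCases hlast (fun j => hprev j) i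
  obtain ⟨y, hyJ, hyreg, hyind⟩ := key g le_rfl
  refine ⟨y, hyJ, ⟨hyreg, ?_⟩, hyind⟩
  refine Submodule.top_ne_ideal_smul_of_le_jacobson_annihilator
    (le_trans (le_trans (Ideal.span_le.mpr ?_) hJm)
      (IsLocalRing.maximalIdeal_le_jacobson _))
  intro r hr
  obtain ⟨i, rfl⟩ := (List.mem_ofFn' _ _).mp hr
  exact hyJ i
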